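/- Let (A,+) be an abelian group, ψ an automorphism of (A,+), and x ∈ A such that: (1) the orbit X := {ψ^z(x) : z ∈ ℤ} has more than one element and generates the group (A,+); and (2) for all k ∈ ℕ and all integers a_1, …, a_k, z_1, …, z_k, if a_1 ψ^{z_1}(x) + ⋯ + a_k ψ^{z_k}(x) = 0 then ψ^{a_1 + ⋯ + a_k} = id_A. Then there exists a binary operation ∘ on A such that (A, +, ∘) is a one-generator left brace of multipermutation level 2 in which λ_t = ψ for every t ∈ X; explicitly, a∘b := a + λ_a(b) where λ is the group homomorphism from (A,+) to Aut(A,+) determined by λ_t := ψ for t ∈ X. -/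

import Mathlib

/-!
Let `F = ℤ →₀ ℤ`, let `p : F → A` send `f` to `∑ f(z) ψ^z(x)` (onto, as the orbit `X` generates
`A`) and let `s : F → ℤ` be the sum of the coefficients. Hypothesis (2) says exactly that
`ker p ⊆ ker (f ↦ ψ^{s f})`, so `Λ (p f) := ψ^{s f}` is a well-defined homomorphism
`(A,+) → Aut(A,+)` with `Λ = ψ` on `X`. As `X` is `ψ`-stable, `Λ ∘ ψ = Λ`, hence
`Λ (Λ_a b) = Λ_b`. For any such homomorphism, `a ∘ b = a + Λ_a b` is a left brace with
`Soc_1 = ker Λ`, and `a + b - a ∘ b = b - Λ_a b ∈ ker Λ`, so `Soc_2 = A`; the level is exactly 2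
because `Λ_x = ψ ≠ id`. A sub-brace containing `x` contains `Λ_{z x} x = ψ^z x` for all `z`,
hence all of `A`.
-/

/-- The socle series of a brace-like structure on an abelian group `(A,+)` with
multiplication `mul`: `Soc_0 = {0}`, `Soc_{n+1} = {a | ∀ b, a + b - a∘b ∈ Soc_n}`. -/
def socSeqF {A : Type*} [AddCommGroup A] (mul : A → A → A) : ℕ → Set A
  | 0 => {0}
  | n + 1 => {a | ∀ b, a + b - mul a b ∈ socSeqF mul n}

/-- Multipermutation level `n`: `n` minimal with `Soc_n = A`. -/
def BraceMPLF {A : Type*} [AddCommGroup A] (mul : A → A → A) (n : ℕ) : Prop :=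
  socSeqF mul n = Set.univ ∧ ∀ m < n, socSeqF mul m ≠ Set.univ

/-- A sub-left-brace: a subgroup of `(A,+)` which is also a subgroup of `(A,∘)`,
i.e. nonempty and closed under `mul` and the `∘`-inverse `inv`. -/
def IsSubBraceF {A : Type*} [AddCommGroup A] (mul : A → A → A) (inv : A → A)
    (B : Set A) : Prop :=
  (∃ Sa : AddSubgroup A, (Sa : Set A) = B) ∧ B.Nonempty ∧
    (∀ a ∈ B, ∀ b ∈ B, mul a b ∈ B) ∧ (∀ a ∈ B, inv a ∈ B)

/-- `A(x)`: the smallest sub-left-brace containing `x`. -/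
def braceClosureF {A : Type*} [AddCommGroup A] (mul : A → A → A) (inv : A → A)
    (x : A) : Set A :=
  ⋂₀ {B : Set A | IsSubBraceF mul inv B ∧ x ∈ B}

namespace HomBrace

variable {A : Type*} [AddCommGroup A] (Λ : A →+ AddAut A)

theorem map_add_apply (hΛ : ∀ a b, Λ (Λ a b) = Λ b) (a b : A) :
    Λ (a + Λ a b) = Λ a + Λ b := by
  rw [map_add, hΛ]

theorem map_neg_apply (hΛ : ∀ a b, Λ (Λ a b) = Λ b) (a b : A) : Λ ((-Λ a) b) = Λ b := by
  conv_rhs => rw [← AddAut.apply_neg_self _ (Λ a) b, hΛ]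

theorem mul_assoc (hΛ : ∀ a b, Λ (Λ a b) = Λ b) (a b c : A) :
    (a + Λ a b) + Λ (a + Λ a b) c = a + Λ a (b + Λ b c) := by
  rw [map_add_apply Λ hΛ, map_add, AddAut.add_apply, add_assoc]

theorem inv_mul (hΛ : ∀ a b, Λ (Λ a b) = Λ b) (a : A) :
    -((-Λ a) a) + Λ (-((-Λ a) a)) a = 0 := by
  rw [map_neg, map_neg_apply Λ hΛ, neg_add_cancel]

theorem mul_inv (a : A) : a + Λ a (-((-Λ a) a)) = 0 := by
  rw [map_neg, AddAut.apply_neg_self, add_neg_cancel]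

theorem mul_add (a b c : A) : (a + Λ a (b + c)) + a = (a + Λ a b) + (a + Λ a c) := by
  rw [map_add]
  abel

theorem mem_socSeqF_one_iff (a : A) :
    a ∈ socSeqF (fun a b => a + Λ a b) 1 ↔ Λ a = 0 := by
  simp only [socSeqF, Set.mem_ofPred_eq, Set.mem_singleton_iff, add_sub_add_left_eq_sub,
    sub_eq_zero, AddEquiv.ext_iff, AddAut.zero_apply]
  exact forall_congr' fun _ => eq_comm

theorem socSeqF_two_eq_univ (hΛ : ∀ a b, Λ (Λ a b) = Λ b) :
    socSeqF (fun a b => a + Λ a b) 2 = Set.univ := by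
  refine Set.eq_univ_of_forall fun a b => ?_
  rw [mem_socSeqF_one_iff, add_sub_add_left_eq_sub, map_sub, hΛ, sub_self]

theorem braceMPLF_two [Nontrivial A] (hΛ : ∀ a b, Λ (Λ a b) = Λ b) (hΛ0 : Λ ≠ 0) :
    BraceMPLF (fun a b => a + Λ a b) 2 := by
  refine ⟨socSeqF_two_eq_univ Λ hΛ, fun m hm => ?_⟩
  interval_cases m
  · exact Set.singleton_ne_univ 0
  · intro h
    exact hΛ0 (AddMonoidHom.ext fun a => (mem_socSeqF_one_iff Λ a).1 (h ▸ Set.mem_univ a))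

theorem apply_mem_of_isSubBraceF {inv : A → A} {B : Set A}
    (hB : IsSubBraceF (fun a b => a + Λ a b) inv B) {a b : A} (ha : a ∈ B) (hb : b ∈ B) :
    Λ a b ∈ B := by
  obtain ⟨⟨S, rfl⟩, -, hmul, -⟩ := hB
  simpa using S.sub_mem (hmul a ha b hb) ha

theorem braceClosureF_eq_univ (inv : A → A) {y : A}
    (hy : AddSubgroup.closure (Set.range fun z : ℤ => (z • Λ y) y) = ⊤) :
    braceClosureF (fun a b => a + Λ a b) inv y = Set.univ := by
  refine Set.eq_univ_of_forall fun a => Set.mem_sInter.2 ?_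
  rintro B ⟨hB, hyB⟩
  obtain ⟨S, rfl⟩ := hB.1
  have hle : AddSubgroup.closure (Set.range fun z : ℤ => (z • Λ y) y) ≤ S := by
    rw [AddSubgroup.closure_le]
    rintro _ ⟨z, rfl⟩
    change (z • Λ y) y ∈ S
    -- `(z • Λ y) y = Λ (z • y) y = (z • y) ∘ y - z • y`
    rw [← map_zsmul]
    exact apply_mem_of_isSubBraceF Λ hB (S.zsmul_mem hyB z) hyB
  exact hle (hy ▸ AddSubgroup.mem_top a)

end HomBrace

section Orbit

variable {A : Type*} [AddCommGroup A] (ψ : AddAut A) (x : A)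

noncomputable def orbitEval : (ℤ →₀ ℤ) →+ A :=
  Finsupp.liftAddHom fun z => zmultiplesHom A ((z • ψ) x)

noncomputable def coeffSum : (ℤ →₀ ℤ) →+ ℤ :=
  Finsupp.liftAddHom fun _ => AddMonoidHom.id ℤ

theorem orbitEval_single (z n : ℤ) : orbitEval ψ x (Finsupp.single z n) = n • (z • ψ) x := by
  simp [orbitEval]

theorem orbitEval_surjective
    (hX : AddSubgroup.closure (Set.range fun z : ℤ => (z • ψ) x) = ⊤) :
    Function.Surjective (orbitEval ψ x) := by
  rw [← AddMonoidHom.range_eq_top, eq_top_iff, ← hX, AddSubgroup.closure_le]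
  rintro _ ⟨z, rfl⟩
  exact ⟨Finsupp.single z 1, by rw [orbitEval_single, one_smul]⟩

theorem ker_orbitEval_le
    (hrel : ∀ (m : ℕ) (a z : Fin m → ℤ), (∑ i, a i • (z i • ψ) x) = 0 → (∑ i, a i) • ψ = 0) :
    (orbitEval ψ x).ker ≤ ((zmultiplesHom (AddAut A) ψ).comp coeffSum).ker := by
  intro f hf
  let e := f.support.equivFin
  have h0 := hrel _ (fun i => f (e.symm i)) (fun i => e.symm i) (by
    rw [e.symm.sum_comp fun s : f.support => f s • (s.1 • ψ) x,
      Finset.sum_coe_sort f.support fun z => f z • (z • ψ) x]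
    simpa [orbitEval, Finsupp.sum] using hf)
  rw [e.symm.sum_comp fun s : f.support => f s, Finset.sum_coe_sort f.support fun z => f z] at h0
  simpa [coeffSum, Finsupp.sum] using h0

variable (hX : AddSubgroup.closure (Set.range fun z : ℤ => (z • ψ) x) = ⊤)
  (hrel : ∀ (m : ℕ) (a z : Fin m → ℤ), (∑ i, a i • (z i • ψ) x) = 0 → (∑ i, a i) • ψ = 0)

noncomputable def orbitHom : A →+ AddAut A :=
  (orbitEval ψ x).liftOfSurjective (orbitEval_surjective ψ x hX) ⟨_, ker_orbitEval_le ψ x hrel⟩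

theorem orbitHom_orbitEval (f : ℤ →₀ ℤ) :
    orbitHom ψ x hX hrel (orbitEval ψ x f) = coeffSum f • ψ :=
  AddMonoidHom.liftOfRightInverse_comp_apply _ _ _ _ f

theorem orbitHom_apply_orbit (z : ℤ) : orbitHom ψ x hX hrel ((z • ψ) x) = ψ := by
  simpa [orbitEval_single, coeffSum] using orbitHom_orbitEval ψ x hX hrel (Finsupp.single z 1)

theorem orbitHom_zsmul_apply (n : ℤ) (b : A) :
    orbitHom ψ x hX hrel ((n • ψ) b) = orbitHom ψ x hX hrel b := by
  -- both sides are homomorphisms in `b` sending the whole orbit to `ψ`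
  have : (orbitHom ψ x hX hrel).comp (n • ψ).toAddMonoidHom = orbitHom ψ x hX hrel := by
    refine AddMonoidHom.eq_of_eqOn_dense hX ?_
    rintro _ ⟨z, rfl⟩
    simp only [AddMonoidHom.comp_apply, AddEquiv.coe_toAddMonoidHom, ← AddAut.add_apply,
      ← add_zsmul, orbitHom_apply_orbit]
  exact DFunLike.congr_fun this b

theorem orbitHom_orbitHom_apply (a b : A) :
    orbitHom ψ x hX hrel (orbitHom ψ x hX hrel a b) = orbitHom ψ x hX hrel b := by
  obtain ⟨f, rfl⟩ := orbitEval_surjective ψ x hX a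
  rw [orbitHom_orbitEval, orbitHom_zsmul_apply]

end Orbit

/-- Given an abelian group `(A,+)`, `ψ ∈ Aut(A,+)` and `x ∈ A` with a
nontrivial generating orbit `X = {ψ^z(x)}` such that `∑ aᵢ ψ^{zᵢ}(x) = 0` forces
`ψ^{∑ aᵢ} = id`, there is a multiplication `a ∘ b := a + Λ_a(b)` — where
`Λ : (A,+) → Aut(A,+)` is the homomorphism determined by `Λ_t := ψ` for `t ∈ X` —
making `(A,+,∘)` a one-generator left brace of multipermutation level 2 in which
`λ_t = ψ` for every `t ∈ X`. -/
theorem stmt19 {A : Type} [AddCommGroup A] (ψ : AddAut A) (x : A)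
    (h1a : (Set.range fun z : ℤ => ((z • ψ : AddAut A)) x).Nontrivial)
    (h1b : AddSubgroup.closure (Set.range fun z : ℤ => ((z • ψ : AddAut A)) x) = ⊤)
    (h2 : ∀ (m : ℕ) (a z : Fin m → ℤ),
      (∑ i, a i • ((z i • ψ : AddAut A)) x) = 0 → (∑ i, a i) • ψ = 0) :
    ∃ (Λ : A → AddAut A) (e : A) (inv : A → A),
      -- Λ is the additive-to-multiplicative homomorphism with Λ_t = ψ on the orbit X
      (∀ t ∈ Set.range fun z : ℤ => ((z • ψ : AddAut A)) x, Λ t = ψ) ∧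
      (∀ a b : A, Λ (a + b) = Λ a + Λ b) ∧
      -- a ∘ b := a + Λ_a(b) is a group operation with identity e and inverse inv
      (∀ a b c : A, (a + Λ a b) + Λ (a + Λ a b) c = a + Λ a (b + Λ b c)) ∧
      (∀ a : A, e + Λ e a = a) ∧ (∀ a : A, a + Λ a e = a) ∧
      (∀ a : A, inv a + Λ (inv a) a = e) ∧ (∀ a : A, a + Λ a (inv a) = e) ∧
      -- the left brace compatibility (so λ_a(b) = -a + a∘b = Λ_a(b))
      (∀ a b c : A, (a + Λ a (b + c)) + a = (a + Λ a b) + (a + Λ a c)) ∧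
      -- one-generator, of multipermutation level 2
      (∃ y : A, braceClosureF (fun a b => a + Λ a b) inv y = Set.univ) ∧
      BraceMPLF (fun a b => a + Λ a b) 2 := by
  set Λ := orbitHom ψ x h1b h2
  have hΛ := orbitHom_orbitHom_apply ψ x h1b h2
  have hΛx : Λ x = ψ := by simpa using orbitHom_apply_orbit ψ x h1b h2 0
  have hψ : ψ ≠ 0 := by
    rintro rfl
    exact h1a.not_subsingleton (by simp [Set.subsingleton_singleton])
  have hΛ0 : Λ ≠ 0 := fun h => hψ (by rw [← hΛx, h, AddMonoidHom.zero_apply])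
  have : Nontrivial A := Set.nontrivial_of_nontrivial h1a
  refine ⟨Λ, 0, fun a => -((-Λ a) a), ?_, map_add Λ, HomBrace.mul_assoc Λ hΛ, by simp, by simp,
    HomBrace.inv_mul Λ hΛ, HomBrace.mul_inv Λ, HomBrace.mul_add Λ,
    ⟨x, HomBrace.braceClosureF_eq_univ Λ _ (hΛx ▸ h1b)⟩, HomBrace.braceMPLF_two Λ hΛ hΛ0⟩
  rintro _ ⟨z, rfl⟩
  exact orbitHom_apply_orbit ψ x h1b h2 z
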